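/- The MS-UKF estimated mean of an affine-plus-quadratic function matches the true mean through second order: if f(x) = F x + (x−μ)ᵀ M (x−μ) · e (for a fixed direction e) and the sigma points satisfy the three moment conditions (weights sum to 1, first moment 0, second moment P), then the sigma-point weighted mean Σ w_i^m f(μ + δ_i) equals F μ + trace(M P) · e, which is the exact mean E[f(x)] for any x with mean μ and covariance P. -/

import Mathlib

/-!
The sigma-point mean is linear in `f`. For the affine part, the zeroth and first moment
conditions give `∑ wᵢ F(μ + δᵢ) = Fμ`. For the quadratic part, `δᵀMδ = tr(M δδᵀ)` is linear
in `δδᵀ`, so its weighted mean is `tr(M P)` by the second moment condition.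
-/

open Finset Matrix

namespace Matrix

variable {ι n R : Type*} [Fintype n] [CommSemiring R]

theorem dotProduct_mulVec_eq_trace_mul_vecMulVec (M : Matrix n n R) (u v : n → R) :
    u ⬝ᵥ M *ᵥ v = (M * vecMulVec v u).trace := by
  rw [mul_vecMulVec, trace_vecMulVec, dotProduct_comm]

variable (s : Finset ι) (w : ι → R) (δ : ι → n → R)

theorem sum_smul_mulVec_add (F : Matrix n n R) (μ : n → R) (hw : ∑ i ∈ s, w i = 1)
    (hδ : ∑ i ∈ s, w i • δ i = 0) :
    ∑ i ∈ s, w i • F *ᵥ (μ + δ i) = F *ᵥ μ := by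
  simp_rw [mulVec_add, smul_add, sum_add_distrib, ← sum_smul, hw, one_smul, ← mulVec_smul,
    ← mulVec_sum, hδ, mulVec_zero, add_zero]

theorem sum_mul_dotProduct_mulVec_self (M : Matrix n n R) :
    ∑ i ∈ s, w i * (δ i ⬝ᵥ M *ᵥ δ i) =
      (M * ∑ i ∈ s, w i • vecMulVec (δ i) (δ i)).trace := by
  simp_rw [Matrix.mul_sum, trace_sum, Matrix.mul_smul, trace_smul, smul_eq_mul,
    dotProduct_mulVec_eq_trace_mul_vecMulVec]

end Matrix

theorem msukf_mean_affine_quadratic_exact_general (n : ℕ)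
    (F M : Matrix (Fin n) (Fin n) ℝ) (e μ : Fin n → ℝ)
    (f : (Fin n → ℝ) → (Fin n → ℝ))
    (hf : ∀ x, f x = F.mulVec x + (dotProduct (x - μ) (M.mulVec (x - μ))) • e)
    (δ : ℕ → (Fin n → ℝ)) (w : ℕ → ℝ) (P : Matrix (Fin n) (Fin n) ℝ)
    (hw : ∑ i ∈ Finset.range (2 * n + 1), w i = 1)
    (hδ1 : ∑ i ∈ Finset.range (2 * n + 1), w i • δ i = 0)
    (hδ2 : ∑ i ∈ Finset.range (2 * n + 1), w i • Matrix.vecMulVec (δ i) (δ i) = P) :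
    ∑ i ∈ Finset.range (2 * n + 1), w i • f (μ + δ i) =
      F.mulVec μ + (M * P).trace • e := by
  simp_rw [hf, add_sub_cancel_left, smul_add, sum_add_distrib,
    sum_smul_mulVec_add _ w δ F μ hw hδ1, smul_smul, ← sum_smul,
    sum_mul_dotProduct_mulVec_self, hδ2]

/-- The MS-UKF estimated mean of an affine-plus-quadratic function matches the
true mean through second order. -/
theorem msukf_mean_affine_quadratic_exact (n : ℕ) (hn : 0 < n)
    (F M : Matrix (Fin n) (Fin n) ℝ) (hM : M.IsSymm) (e μ : Fin n → ℝ)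
    (f : (Fin n → ℝ) → (Fin n → ℝ))
    (hf : ∀ x, f x = F.mulVec x + (dotProduct (x - μ) (M.mulVec (x - μ))) • e)
    (δ : ℕ → (Fin n → ℝ)) (w : ℕ → ℝ) (P : Matrix (Fin n) (Fin n) ℝ)
    (hw : ∑ i ∈ Finset.range (2 * n + 1), w i = 1)
    (hδ1 : ∑ i ∈ Finset.range (2 * n + 1), w i • δ i = 0)
    (hδ2 : ∑ i ∈ Finset.range (2 * n + 1), w i • Matrix.vecMulVec (δ i) (δ i) = P) :
    ∑ i ∈ Finset.range (2 * n + 1), w i • f (μ + δ i) =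
      F.mulVec μ + (M * P).trace • e :=
  msukf_mean_affine_quadratic_exact_general n F M e μ f hf δ w P hw hδ1 hδ2
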